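/- Fix ε ∈ {1,−1} and define the symmetric bilinear form B on ℝ³ by B((x₁,x₂,x₃),(y₁,y₂,y₃)) := x₁y₃ + x₃y₁ + ε x₂y₂. Let f : ℝ² → ℝ³, f(r,s) := (r, s², s), and M := range f. Then for every (r₀,s₀) ∈ ℝ² with p := f(r₀,s₀): the tangent space T := span{(1,0,0),(0,2s₀,1)} (the span of the partial derivatives of f at (r₀,s₀)) is 2-dimensional, the restriction of B to T is nondegenerate with exactly one positive and one negative direction (Lorentzian signature), ℝ³ = T ⊕ T^⊥ᴮ, and the affine reflection σ_p : ℝ³ → ℝ³ defined by σ_p(p + v + w) := p − v + w for v ∈ T and w ∈ T^⊥ᴮ maps M bijectively onto M. -/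
import Mathlib

set_option linter.unnecessarySeqFocus false
set_option linter.unusedVariables false


/-- The bilinear form B((x₁,x₂,x₃),(y₁,y₂,y₃)) = x₁y₃ + x₃y₁ + ε x₂y₂ on ℝ³. -/
def B3 (ε : ℝ) (x y : Fin 3 → ℝ) : ℝ := x 0 * y 2 + x 2 * y 0 + ε * (x 1 * y 1)

/-- The embedding f(r,s) = (r, s², s) of ℝ² into ℝ³. -/
def f12 : ℝ × ℝ → (Fin 3 → ℝ) := fun p => ![p.1, p.2 ^ 2, p.2]

/-- The tangent space of the image of f12 at f12(r₀,s₀). -/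
def T12 (s₀ : ℝ) : Submodule ℝ (Fin 3 → ℝ) :=
  Submodule.span ℝ {![1, 0, 0], ![0, 2 * s₀, 1]}

/-- The B3-orthogonal complement of a subspace of ℝ³. -/
def perp3 (ε : ℝ) (T : Submodule ℝ (Fin 3 → ℝ)) : Submodule ℝ (Fin 3 → ℝ) where
  carrier := {w | ∀ v ∈ T, B3 ε w v = 0}
  add_mem' := by
    intro x y hx hy v hv
    have h1 := hx v hv
    have h2 := hy v hv
    simp only [B3, Pi.add_apply] at h1 h2 ⊢
    linear_combination h1 + h2
  zero_mem' := by
    intro v hv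
    simp [B3]
  smul_mem' := by
    intro c x hx v hv
    have h := hx v hv
    simp only [B3, Pi.smul_apply, smul_eq_mul] at h ⊢
    linear_combination c * h

lemma mem_T12 (s₀ : ℝ) (x : Fin 3 → ℝ) :
    x ∈ T12 s₀ ↔ ∃ a b : ℝ, x = ![a, 2 * s₀ * b, b] := by
  rw [T12, Submodule.mem_span_pair]
  constructor
  · rintro ⟨a, b, rfl⟩
    exact ⟨a, b, by ext i; fin_cases i <;> simp <;> ring⟩
  · rintro ⟨a, b, rfl⟩
    exact ⟨a, b, by ext i; fin_cases i <;> simp <;> ring⟩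

lemma mem_perp3 (ε s₀ : ℝ) (w : Fin 3 → ℝ) :
    w ∈ perp3 ε (T12 s₀) ↔ w 2 = 0 ∧ w 0 + ε * (w 1 * (2 * s₀)) = 0 := by
  constructor
  · intro hw
    have h1 := hw ![1,0,0] (Submodule.subset_span (by simp))
    have h2 := hw ![0, 2*s₀, 1] (Submodule.subset_span (by simp))
    simp [B3] at h1 h2
    exact ⟨h1, by linear_combination h2⟩
  · rintro ⟨h1, h2⟩ v hv
    rcases (mem_T12 s₀ v).mp hv with ⟨a, b, rfl⟩
    simp [B3]
    linear_combination a * h1 + b * h2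

/-- The affine reflection at the normal space of M at f12(r₀,s₀). -/
def σ3 (ε r₀ s₀ : ℝ) : (Fin 3 → ℝ) → (Fin 3 → ℝ) := fun x =>
  ![2*r₀ - 4*ε*s₀^3 - x 0 - 4*ε*s₀*x 1 + 8*ε*s₀^2*x 2,
    4*s₀^2 + x 1 - 4*s₀*x 2,
    2*s₀ - x 2]

/-- The surface M = f12(ℝ²) ⊆ (ℝ³, B3 ε), ε = ±1, is an extrinsic symmetric space:
at each point the tangent space is 2-dimensional of Lorentzian signature, ℝ³ splits as
its direct sum with its B3-orthogonal complement, and M is invariant under the reflection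
at each affine normal space. -/
theorem stmt12 (ε : ℝ) (hε : ε = 1 ∨ ε = -1) (r₀ s₀ : ℝ) :
    Module.finrank ℝ ↥(T12 s₀) = 2 ∧
      (∃ v w : Fin 3 → ℝ, v ∈ T12 s₀ ∧ w ∈ T12 s₀ ∧
        B3 ε v v < 0 ∧ 0 < B3 ε w w ∧ B3 ε v w = 0 ∧
        T12 s₀ = Submodule.span ℝ {v, w}) ∧
      (∀ u ∈ T12 s₀, (∀ u' ∈ T12 s₀, B3 ε u u' = 0) → u = 0) ∧
      IsCompl (T12 s₀) (perp3 ε (T12 s₀)) ∧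
      (∃ σ : (Fin 3 → ℝ) → (Fin 3 → ℝ),
        (∀ v ∈ T12 s₀, ∀ w ∈ perp3 ε (T12 s₀),
          σ (f12 (r₀, s₀) + v + w) = f12 (r₀, s₀) - v + w) ∧
        Set.BijOn σ (Set.range f12) (Set.range f12)) := by
  have hu1 : (![1,0,0] : Fin 3 → ℝ) ∈ T12 s₀ := Submodule.subset_span (by simp)
  have hu2 : (![0, 2*s₀, 1] : Fin 3 → ℝ) ∈ T12 s₀ := Submodule.subset_span (by simp)
  refine ⟨?_, ?_, ?_, ?_, ?_⟩
  · -- finrank = 2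
    have hli : LinearIndependent ℝ ![(![1,0,0] : Fin 3 → ℝ), ![0, 2*s₀, 1]] := by
      rw [LinearIndependent.pair_iff]
      intro s t h
      have h0 := congrFun h 0
      have h2 := congrFun h 2
      simp at h0 h2
      exact ⟨h0, h2⟩
    have hr : T12 s₀ =
        Submodule.span ℝ (Set.range ![(![1,0,0] : Fin 3 → ℝ), ![0, 2*s₀, 1]]) := by
      rw [T12]
      congr 1
      ext x
      simp [Fin.exists_fin_two, or_comm]
    rw [hr, finrank_span_eq_card hli]
    simp
  · -- signature
    set c : ℝ := 4 * ε * s₀ ^ 2 with hc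
    refine ⟨![(-1-c)/2, 2*s₀, 1], ![(1-c)/2, 2*s₀, 1],
      (mem_T12 s₀ _).mpr ⟨(-1-c)/2, 1, by ext i; fin_cases i <;> simp⟩,
      (mem_T12 s₀ _).mpr ⟨(1-c)/2, 1, by ext i; fin_cases i <;> simp⟩,
      ?_, ?_, ?_, ?_⟩
    · show B3 ε _ _ < 0
      simp [B3, hc]; ring_nf; norm_num
    · show (0:ℝ) < B3 ε _ _
      simp [B3, hc]; ring_nf; norm_num
    · simp [B3, hc]; ring
    · apply le_antisymm
      · rw [T12, Submodule.span_le]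
        rintro x (rfl | rfl)
        · -- u1 = w - v
          have : (![1,0,0] : Fin 3 → ℝ) =
              (-1 : ℝ) • ![(-1-c)/2, 2*s₀, 1] + (1:ℝ) • ![(1-c)/2, 2*s₀, 1] := by
            ext i; fin_cases i <;> simp <;> ring
          rw [this]
          exact Submodule.mem_span_pair.mpr ⟨-1, 1, rfl⟩
        · have : (![0, 2*s₀, 1] : Fin 3 → ℝ) =
              ((1-c)/2 : ℝ) • ![(-1-c)/2, 2*s₀, 1] + (-(-1-c)/2 : ℝ) • ![(1-c)/2, 2*s₀, 1] := by
            ext i; fin_cases i <;> simp <;> ring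
          rw [this]
          exact Submodule.mem_span_pair.mpr ⟨_, _, rfl⟩
      · rw [Submodule.span_le]
        rintro x (rfl | rfl)
        · exact (mem_T12 s₀ _).mpr ⟨(-1-c)/2, 1, by ext i; fin_cases i <;> simp⟩
        · exact (mem_T12 s₀ _).mpr ⟨(1-c)/2, 1, by ext i; fin_cases i <;> simp⟩
  · -- nondegenerate
    intro u hu h
    rcases (mem_T12 s₀ u).mp hu with ⟨a, b, rfl⟩
    have h1 := h _ hu1
    have h2 := h _ hu2
    simp [B3] at h1 h2
    have hb : b = 0 := h1
    have ha : a = 0 := by subst hb; simpa using h2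
    ext i; fin_cases i <;> simp [ha, hb]
  · -- IsCompl
    constructor
    · rw [Submodule.disjoint_def]
      intro x hx hx'
      rcases (mem_T12 s₀ x).mp hx with ⟨a, b, rfl⟩
      rcases (mem_perp3 ε s₀ _).mp hx' with ⟨h1, h2⟩
      simp at h1 h2
      have hb : b = 0 := h1
      have ha : a = 0 := by
        subst hb; simp at h2; linarith [h2]
      ext i; fin_cases i <;> simp [ha, hb]
    · rw [codisjoint_iff, Submodule.eq_top_iff']
      intro x
      set a : ℝ := x 0 + ε * ((x 1 - 2*s₀*(x 2)) * (2*s₀)) with ha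
      set b : ℝ := x 2 with hb
      have hv : (![a, 2*s₀*b, b] : Fin 3 → ℝ) ∈ T12 s₀ := (mem_T12 s₀ _).mpr ⟨a, b, rfl⟩
      have hw : x - ![a, 2*s₀*b, b] ∈ perp3 ε (T12 s₀) := by
        rw [mem_perp3]
        constructor
        · simp [hb]
        · simp only [Pi.sub_apply]
          simp [ha, hb]
      have heq : ![a, 2*s₀*b, b] + (x - ![a, 2*s₀*b, b]) = x := by abel
      rw [← heq]
      exact Submodule.add_mem _ (Submodule.mem_sup_left hv) (Submodule.mem_sup_right hw)
  · -- reflection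
    refine ⟨σ3 ε r₀ s₀, ?_, ?_⟩
    · intro v hv w hw
      rcases (mem_T12 s₀ v).mp hv with ⟨a, b, rfl⟩
      rcases (mem_perp3 ε s₀ w).mp hw with ⟨h1, h2⟩
      ext i
      fin_cases i
      · simp [σ3, f12]; linear_combination (8*ε*s₀^2) * h1 - 2 * h2
      · simp [σ3, f12]; linear_combination (-4*s₀) * h1
      · simp [σ3, f12]; linear_combination (-2) * h1
    · have hmaps : Set.MapsTo (σ3 ε r₀ s₀) (Set.range f12) (Set.range f12) := by
        rintro _ ⟨⟨r, s⟩, rfl⟩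
        refine ⟨(2*r₀ - 4*ε*s₀^3 - r - 4*ε*s₀*s^2 + 8*ε*s₀^2*s, 2*s₀ - s), ?_⟩
        ext i
        fin_cases i <;> simp [σ3, f12] <;> ring
      have hinv : ∀ x, σ3 ε r₀ s₀ (σ3 ε r₀ s₀ x) = x := by
        intro x
        ext i
        fin_cases i <;> simp [σ3] <;> ring
      exact Set.InvOn.bijOn ⟨fun x _ => hinv x, fun x _ => hinv x⟩ hmaps hmaps
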